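/- Let X be the 5-element poset {a, b, c, g, h} with a < c, b < c, c < g, c < h. There is no bijection φ from the vertices of O(X) to the vertices of C(X) such that two vertices of O(X) are adjacent (joined by an edge) if and only if their images under φ are adjacent in C(X); i.e., the 1-skeletons of O(X) and C(X) are not isomorphic as graphs. -/

import Mathlib

/-- Indicator vector of a subset `W` of `P` in `ℝ^P`. -/
noncomputable def rho {P : Type*} (W : Set P) : P → ℝ := W.indicator fun _ => 1

/-- The order polytope of a finite poset `P`. -/
def orderPolytope (P : Type*) [Fintype P] [PartialOrder P] : Set (P → ℝ) :=
  {f | (∀ i, 0 ≤ f i ∧ f i ≤ 1) ∧ ∀ i j : P, i ≤ j → f j ≤ f i}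

/-- The chain polytope of a finite poset `P`. -/
def chainPolytope (P : Type*) [Fintype P] [PartialOrder P] : Set (P → ℝ) :=
  {f | (∀ i, 0 ≤ f i) ∧ ∀ C : Finset P, IsMaxChain (· ≤ ·) (C : Set P) → ∑ i ∈ C, f i ≤ 1}

/-- A subset `S` of a poset `P` is connected in `P` if any two of its elements are
joined by a sequence within `S` whose consecutive members are comparable in `P`. -/
def ConnIn {P : Type*} [PartialOrder P] (S : Set P) : Prop :=
  ∀ x ∈ S, ∀ y ∈ S,
    Relation.ReflTransGen (fun u v => u ∈ S ∧ v ∈ S ∧ (u ≤ v ∨ v ≤ u)) x y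

/-- The segment joining `u` and `v` is an edge (one-dimensional face) of `S`. -/
def IsEdgeOf {E : Type*} [AddCommGroup E] [Module ℝ E] (S : Set E) (u v : E) : Prop :=
  u ≠ v ∧ IsExtreme ℝ S (segment ℝ u v)

/-- The set of maximal elements of a subset of a poset. -/
def maxSet {P : Type*} [PartialOrder P] (S : Set P) : Set P :=
  {x | x ∈ S ∧ ∀ y ∈ S, x ≤ y → x = y}

/-- The set of minimal elements of a subset of a poset. -/
def minSet {P : Type*} [PartialOrder P] (S : Set P) : Set P :=
  {x | x ∈ S ∧ ∀ y ∈ S, y ≤ x → x = y}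

/-- The 1-skeleton of the order polytope, combinatorially: vertices are poset
ideals, adjacency is proper inclusion with connected difference. -/
def orderSkeleton (P : Type*) [PartialOrder P] :
    SimpleGraph {I : Set P // IsLowerSet I} :=
  SimpleGraph.fromRel fun I J => I.1 ⊂ J.1 ∧ ConnIn (J.1 \ I.1)

/-- The 1-skeleton of the chain polytope, combinatorially: vertices are antichains,
adjacency is connectedness of the symmetric difference. -/
def chainSkeleton (P : Type*) [PartialOrder P] :
    SimpleGraph {A : Set P // IsAntichain (· ≤ ·) A} :=
  SimpleGraph.fromRel fun A B => ConnIn ((A.1 \ B.1) ∪ (B.1 \ A.1))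

/-- The multiset of vertex degrees of a graph (the degree sequence, up to order). -/
noncomputable def degMultiset {V : Type*} [Fintype V] (G : SimpleGraph V) : Multiset ℕ :=
  Finset.univ.val.map fun v => (G.neighborSet v).ncard

/-- `P` contains the poset `X = {a,b,c,g,h}` with `a<c, b<c, c<g, c<h` as a subposet. -/
def ContainsX (P : Type*) [PartialOrder P] : Prop :=
  ∃ a b c g h : P, a < c ∧ b < c ∧ c < g ∧ c < h ∧
    ¬ a ≤ b ∧ ¬ b ≤ a ∧ ¬ g ≤ h ∧ ¬ h ≤ g

/-- The pair `(I, J)` of poset ideals with `I ⊂ J` and `J \ I` connected in `P`. -/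
def OmegaP {P : Type*} [PartialOrder P] (I J : Set P) : Prop :=
  IsLowerSet I ∧ IsLowerSet J ∧ I ⊂ J ∧ ConnIn (J \ I)

/-- The pair `(A, B)` of distinct antichains with connected symmetric difference. -/
def PsiP {P : Type*} [PartialOrder P] (A B : Set P) : Prop :=
  IsAntichain (· ≤ ·) A ∧ IsAntichain (· ≤ ·) B ∧ A ≠ B ∧ ConnIn ((A \ B) ∪ (B \ A))

/-- First component of the map `Ω → Ψ`: `A = max J`. -/
def FmapA {P : Type*} [PartialOrder P] (_I J : Set P) : Set P := maxSet J

/-- Second component of the map `Ω → Ψ`: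
`B = min(J \ I) ∪ (max I ∩ max J)`, with `min(J \ I) := ∅` when `|J \ I| = 1`. -/
def FmapB {P : Type*} [PartialOrder P] (I J : Set P) : Set P :=
  (if (J \ I).ncard = 1 then ∅ else minSet (J \ I)) ∪ (maxSet I ∩ maxSet J)

noncomputable instance {P : Type*} [Fintype P] [PartialOrder P] :
    Fintype {I : Set P // IsLowerSet I} := Fintype.ofFinite _

noncomputable instance {P : Type*} [Fintype P] [PartialOrder P] :
    Fintype {A : Set P // IsAntichain (· ≤ ·) A} := Fintype.ofFinite _

/-- The five-element poset `X = {a,b,c,g,h}` with `a<c, b<c, c<g, c<h`. -/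
inductive XP | a | b | c | g | h
deriving DecidableEq

instance : Fintype XP :=
  ⟨{.a, .b, .c, .g, .h}, fun x => by cases x <;> simp⟩

/-- The order relation of `X`. -/
def XP.leB : XP → XP → Bool
  | .a, .a => true | .a, .c => true | .a, .g => true | .a, .h => true
  | .b, .b => true | .b, .c => true | .b, .g => true | .b, .h => true
  | .c, .c => true | .c, .g => true | .c, .h => true
  | .g, .g => true | .h, .h => true
  | _, _ => false

instance : LE XP := ⟨fun x y => XP.leB x y = true⟩

instance : DecidableRel (· ≤ · : XP → XP → Prop) :=
  fun x y => inferInstanceAs (Decidable (XP.leB x y = true))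

instance : PartialOrder XP where
  le_refl := by decide
  le_trans := by decide
  le_antisymm := by decide

/-!
The element `c` of `X` is comparable to every element, so any set containing it is connected
and `{c}` is the only antichain containing it: `{c}` is a universal vertex of `C(X)`. In `O(X)`
no vertex is universal: an ideal `I` is not adjacent to `I ∆ {a, b}` (if `c ∉ I`) or to
`I ∆ {g, h}` (if `c ∈ I`), because two ideals differing by an incomparable pair are either
incomparable or differ by a disconnected set.
-/

open scoped symmDiff

theorem SimpleGraph.Iso.isUniversal_symm_apply {V W : Type*} {G : SimpleGraph V}
    {H : SimpleGraph W} (f : G ≃g H) {w : W} (hw : H.IsUniversal w) :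
    G.IsUniversal (f.symm w) := fun v hv =>
  f.map_adj_iff.1 <| by
    rw [RelIso.apply_symm_apply]
    exact hw fun h => hv (by rw [h, RelIso.symm_apply_apply])

section Poset

variable {P : Type*} [PartialOrder P]

theorem connIn_of_mem_of_forall_comparable {S : Set P} {x : P} (hx : x ∈ S)
    (hcomp : ∀ y, x ≤ y ∨ y ≤ x) : ConnIn S := fun y hy z hz =>
  (Relation.ReflTransGen.single ⟨hy, hx, (hcomp y).symm⟩).tail ⟨hx, hz, hcomp z⟩

theorem not_connIn_pair {x y : P} (hxy : ¬x ≤ y) (hyx : ¬y ≤ x) : ¬ConnIn ({x, y} : Set P) := by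
  intro hconn
  suffices ∀ z, Relation.ReflTransGen
      (fun u v => u ∈ ({x, y} : Set P) ∧ v ∈ ({x, y} : Set P) ∧ (u ≤ v ∨ v ≤ u)) x z → z = x by
    obtain rfl : y = x := this y (hconn x (by simp) y (by simp))
    exact hxy le_rfl
  intro z hz
  induction hz with
  | refl => rfl
  | tail _ hstep ih =>
    obtain ⟨-, hmem | rfl, hcomp⟩ := hstep
    · exact hmem
    · subst ih
      exact (hcomp.elim hxy hyx).elim

theorem IsAntichain.eq_singleton_of_forall_comparable {A : Set P} (hA : IsAntichain (· ≤ ·) A)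
    {x : P} (hx : x ∈ A) (hcomp : ∀ y, x ≤ y ∨ y ≤ x) : A = {x} :=
  Set.eq_singleton_iff_unique_mem.2 ⟨hx, fun y hy => by_contra fun hne =>
    (hcomp y).elim (hA hx hy (Ne.symm hne)) (hA hy hx hne)⟩

theorem chainSkeleton_isUniversal_singleton {x : P} (hcomp : ∀ y, x ≤ y ∨ y ≤ x) :
    (chainSkeleton P).IsUniversal ⟨{x}, IsAntichain.singleton⟩ := by
  intro B hB
  have hxB : x ∉ B.1 := fun hx =>
    hB (Subtype.ext (B.2.eq_singleton_of_forall_comparable hx hcomp).symm)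
  rw [chainSkeleton, SimpleGraph.fromRel_adj]
  exact ⟨hB, Or.inl (connIn_of_mem_of_forall_comparable (x := x) (by simp [hxB]) hcomp)⟩

theorem orderSkeleton_not_adj_of_symmDiff_eq_pair {I J : {I : Set P // IsLowerSet I}} {x y : P}
    (hIJ : I.1 ∆ J.1 = {x, y}) (hxy : ¬x ≤ y) (hyx : ¬y ≤ x) : ¬(orderSkeleton P).Adj I J := by
  rw [orderSkeleton, SimpleGraph.fromRel_adj]
  rintro ⟨-, ⟨hlt, hconn⟩ | ⟨hlt, hconn⟩⟩
  · rw [← symmDiff_of_le hlt.le, hIJ] at hconn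
    exact not_connIn_pair hxy hyx hconn
  · rw [← symmDiff_of_ge hlt.le, hIJ] at hconn
    exact not_connIn_pair hxy hyx hconn

end Poset

namespace XP

theorem le_c_or_c_le (x : XP) : c ≤ x ∨ x ≤ c := by
  cases x <;> decide

theorem isLowerSet_iff {S : Set XP} :
    IsLowerSet S ↔ (c ∈ S → a ∈ S ∧ b ∈ S) ∧ (g ∈ S → c ∈ S) ∧ (h ∈ S → c ∈ S) := by
  refine ⟨fun hS => ⟨fun hc => ⟨hS (by decide) hc, hS (by decide) hc⟩,
    fun hg => hS (by decide) hg, fun hh => hS (by decide) hh⟩, ?_⟩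
  rintro ⟨hc, hg, hh⟩ u v huv hv
  cases u <;> cases v <;> first | exact hv | (exfalso; revert huv; decide) | tauto

theorem orderSkeleton_not_isUniversal (I : {I : Set XP // IsLowerSet I}) :
    ¬(orderSkeleton XP).IsUniversal I := by
  have hI := isLowerSet_iff.1 I.2
  obtain ⟨x, y, hxy, hyx, hJ⟩ : ∃ x y : XP, ¬x ≤ y ∧ ¬y ≤ x ∧ IsLowerSet (I.1 ∆ {x, y}) := by
    by_cases hc : c ∈ I.1
    · refine ⟨g, h, by decide, by decide, isLowerSet_iff.2 ?_⟩
      simp only [Set.mem_symmDiff, Set.mem_insert_iff, Set.mem_singleton_iff, reduceCtorEq]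
      tauto
    · refine ⟨a, b, by decide, by decide, isLowerSet_iff.2 ?_⟩
      simp only [Set.mem_symmDiff, Set.mem_insert_iff, Set.mem_singleton_iff, reduceCtorEq]
      tauto
  have hdiff : I.1 ∆ (I.1 ∆ {x, y}) = {x, y} := symmDiff_symmDiff_cancel_left _ _
  intro hU
  refine orderSkeleton_not_adj_of_symmDiff_eq_pair (J := ⟨_, hJ⟩) hdiff hxy hyx (hU fun hIJ => ?_)
  rw [← show I.1 = I.1 ∆ {x, y} from congrArg Subtype.val hIJ, symmDiff_self] at hdiff
  exact (Set.insert_nonempty x {y}).ne_empty hdiff.symm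

end XP

theorem stmt17 : IsEmpty (orderSkeleton XP ≃g chainSkeleton XP) :=
  ⟨fun f => XP.orderSkeleton_not_isUniversal _
    (f.isUniversal_symm_apply (chainSkeleton_isUniversal_singleton XP.le_c_or_c_le))⟩
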